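/- If p : E → B is a fibration, then p has the unique path lifting property (upl) if and only if p has the unique path homotopically lifting property (uphl). -/

import Mathlib

/-!
Uphl implies upl for any map: if `p ∘ α = p ∘ β`, then for every `s` the restrictions of `α` and
`β` to `[0, s]` have equal, hence homotopic, projections, so they are homotopic rel endpoints and
`α s = β s`. Conversely, lift a homotopy rel endpoints from `p ∘ α` to `p ∘ β` to a homotopy
starting at `α`. By upl its sides, lifts of constant paths, are constant, and its top, a lift of
`p ∘ β` starting at `β 0`, is `β`; so it is a homotopy from `α` to `β` rel endpoints.
-/

universe u

open scoped unitInterval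

/-- `p` has the unique path lifting property (upl). -/
def Upl {E B : Type*} [TopologicalSpace E] [TopologicalSpace B] (p : C(E, B)) : Prop :=
  ∀ α β : C(unitInterval, E), α 0 = β 0 → p.comp α = p.comp β → α = β

/-- `p` has the unique path homotopically lifting property (uphl). -/
def Uphl {E B : Type*} [TopologicalSpace E] [TopologicalSpace B] (p : C(E, B)) : Prop :=
  ∀ α β : C(unitInterval, E), α 0 = β 0 →
    (p.comp α).HomotopicRel (p.comp β) {0, 1} →
    α.HomotopicRel β {0, 1}

/-- `p` is a (Hurewicz) fibration: it has the homotopy lifting property with respect to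
every topological space. -/
def IsFibration {E B : Type*} [TopologicalSpace E] [TopologicalSpace B] (p : C(E, B)) : Prop :=
  ∀ (X : Type u) [TopologicalSpace X] (f : C(X, E)) (F : C(X × unitInterval, B)),
    (∀ x, F (x, 0) = p (f x)) →
    ∃ F' : C(X × unitInterval, E), (∀ z, p (F' z) = F z) ∧ (∀ x, F' (x, 0) = f x)


open ContinuousMap unitInterval

section

variable {E B : Type*} [TopologicalSpace E] [TopologicalSpace B] {p : C(E, B)}

theorem Uphl.upl (h : Uphl p) : Upl p := by
  intro α β h0 hαβ
  ext s
  let restrict : C(I, I) := ⟨(s * ·), by fun_prop⟩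
  have hhom : (p.comp (α.comp restrict)).HomotopicRel (p.comp (β.comp restrict)) {0, 1} := by
    rw [← comp_assoc, ← comp_assoc, hαβ]
    exact .refl _
  have hend := (h _ _ (by simpa [restrict] using h0) hhom).fst_eq_snd (x := 1) (by simp)
  simpa [restrict] using hend

theorem IsFibration.exists_lift.{v} (hp : IsFibration.{v} p) {X : Type}
    [TopologicalSpace X] (f : C(X, E)) (F : C(X × I, B)) (hF : ∀ x, F (x, 0) = p (f x)) :
    ∃ F' : C(X × I, E), (∀ z, p (F' z) = F z) ∧ ∀ x, F' (x, 0) = f x := by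
  obtain ⟨F', hF'p, hF'0⟩ := hp (ULift.{v} X) (f.comp ⟨ULift.down, continuous_uliftDown⟩)
    (F.comp ⟨Prod.map ULift.down id, by fun_prop⟩) fun x => hF x.down
  exact ⟨F'.comp ⟨Prod.map ULift.up id, by fun_prop⟩, fun z => hF'p _, fun x => hF'0 ⟨x⟩⟩

theorem IsFibration.exists_homotopy_lift.{v} (hp : IsFibration.{v} p) (α : C(I, E))
    {γ : C(I, B)} (G : (p.comp α).Homotopy γ) :
    ∃ H : C(I × I, E), (∀ z, p (H z) = G z) ∧ ∀ x, H (0, x) = α x := by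
  obtain ⟨F', hF'p, hF'0⟩ :=
    hp.exists_lift α (G.toContinuousMap.comp ⟨Prod.swap, by fun_prop⟩) fun x => by simp
  exact ⟨F'.comp ⟨Prod.swap, by fun_prop⟩, fun z => hF'p _, hF'0⟩

theorem Upl.eq_const_of_comp_eq_const (h : Upl p) {γ : C(I, E)} {b : B}
    (hγ : p.comp γ = const I b) : γ = const I (γ 0) :=
  h _ _ rfl (by ext t; simpa using congr($hγ t).trans congr($hγ 0).symm)

theorem Upl.uphl_of_isFibration.{v} (h : Upl p) (hp : IsFibration.{v} p) : Uphl p := by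
  rintro α β h0 ⟨G⟩
  obtain ⟨H, hHp, hH0⟩ := hp.exists_homotopy_lift α G.toHomotopy
  have hends : ∀ t, ∀ x ∈ ({0, 1} : Set I), H (t, x) = α x := by
    intro t x hx
    have := h.eq_const_of_comp_eq_const (γ := H.comp ⟨(·, x), by fun_prop⟩) (b := p (α x))
      (by ext s; simp [hHp, G.eq_fst s hx])
    simpa [hH0] using congr($this t)
  have htop : H.comp ⟨(1, ·), by fun_prop⟩ = β :=
    h _ _ (by simp [hends 1 0 (by simp), h0]) (by ext x; simp [hHp])
  exact ⟨{ toContinuousMap := H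
           map_zero_left := hH0
           map_one_left := fun x => congr($htop x)
           prop' := hends }⟩

end

theorem fibration_upl_iff_uphl {E B : Type*} [TopologicalSpace E] [TopologicalSpace B]
    (p : C(E, B)) (hp : IsFibration p) :
    Upl p ↔ Uphl p :=
  ⟨fun h => h.uphl_of_isFibration hp, Uphl.upl⟩
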